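/- For 1 ≤ i ≤ n and k ≥ 1, let Cov(k,i) = {w·w' ∈ Σ_n^* : Δ(w)(i) < 0 and every proper prefix u of w satisfies 0 ≤ Δ(u)(i) ≤ k}. Let L_{neg,i} be the linear set with base vector −e_i and period set {e_j, −e_j : 1 ≤ j ≤ n, j ≠ i}, and let Z be the linear set with base vector 0 and period set {e_j, −e_j : 1 ≤ j ≤ n}. Then (1) Cov(k,i) ⊆ K^k(L_{neg,i})·K^k(Z); (2) L_{neg,i} ⊕⁺ Z = ∅, so K^k(L_{neg,i})·K^k(Z) ∈ R_2; and (3) K^k(L_{neg,i})·K^k(Z) is disjoint from the coverability Dyck language D_n^↑. -/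

import Mathlib

set_option linter.unusedVariables false

/-! ### Alphabet, effects, Dyck languages -/

abbrev Sig (n : ℕ) := Fin n × Bool

def letterEff {n : ℕ} (a : Sig n) : Fin n → ℤ :=
  fun j => if j = a.1 then (if a.2 then 1 else -1) else 0

def wordEff {n : ℕ} (w : List (Sig n)) : Fin n → ℤ :=
  (w.map letterEff).sum

/-- The Dyck language `D_n`. -/
def Dyck (n : ℕ) : Language (Sig n) :=
  {w | wordEff w = 0 ∧ ∀ u, u <+: w → ∀ j, 0 ≤ wordEff u j}

/-- The coverability Dyck language `D_n^↑`. -/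
def CovDyck (n : ℕ) : Language (Sig n) :=
  {w | ∀ u, u <+: w → ∀ j, 0 ≤ wordEff u j}

/-- The `ℤ`-Dyck language `D_n^ℤ`. -/
def ZDyck (n : ℕ) : Language (Sig n) :=
  {w | wordEff w = 0}

/-! ### VASS -/

structure VASS (A : Type) where
  Q : Type
  C : Type
  finQ : Finite Q
  finC : Finite C
  E : Set (Q × Option A × (C → ℤ) × Q)
  finE : E.Finite

inductive VASS.NRun {A : Type} (V : VASS A) :
    (V.Q × (V.C → ℕ)) → List A → (V.Q × (V.C → ℕ)) → Prop
  | refl (cfg : V.Q × (V.C → ℕ)) : VASS.NRun V cfg [] cfg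
  | step {q : V.Q} {c : V.C → ℕ} {a : Option A} {d : V.C → ℤ} {q' : V.Q}
      {c' : V.C → ℕ} {w : List A} {last : V.Q × (V.C → ℕ)} :
      (q, a, d, q') ∈ V.E →
      (∀ j, (c' j : ℤ) = (c j : ℤ) + d j) →
      VASS.NRun V (q', c') w last →
      VASS.NRun V (q, c) (a.toList ++ w) last

/-- An initialized VASS: generalized initial/final configurations,
with `none` playing the role of `ω`. -/
structure InitVASS (A : Type) extends VASS A where
  qin : Q
  qout : Q
  cin : C → Option ℕ
  cout : C → Option ℕ

/-- The reachability language of an initialized VASS. -/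
def InitVASS.lang {A : Type} (V : InitVASS A) : Language A :=
  {w | ∃ c0 cl : V.C → ℕ,
      V.toVASS.NRun (V.qin, c0) w (V.qout, cl) ∧
      (∀ j m, V.cin j = some m → c0 j = m) ∧
      (∀ j m, V.cout j = some m → cl j = m)}

/-! ### Transducers -/

structure Transducer (G A : Type) where
  Q : Type
  finQ : Finite Q
  start : Q
  accept : Set Q
  trans : Set (Q × (Option G × Option A) × Q)
  finT : trans.Finite

inductive Transducer.Path {G A : Type} (T : Transducer G A) :
    T.Q → List G → List A → T.Q → Prop
  | refl (q : T.Q) : Transducer.Path T q [] [] q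
  | step {q q' qf : T.Q} {g : Option G} {a : Option A} {u : List G} {v : List A} :
      (q, (g, a), q') ∈ T.trans →
      Transducer.Path T q' u v qf →
      Transducer.Path T q (g.toList ++ u) (a.toList ++ v) qf

/-- The relation recognized by a transducer. -/
def Transducer.rel {G A : Type} (T : Transducer G A) (u : List G) (v : List A) : Prop :=
  ∃ qf ∈ T.accept, T.Path T.start u v qf

/-- `T⁻¹(L)`. -/
def Transducer.invImage {G A : Type} (T : Transducer G A) (L : Language A) : Language G :=
  {u | ∃ v ∈ L, T.rel u v}

/-! ### Regular separability -/

def RegSep {A : Type} (L1 L2 : Language A) : Prop :=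
  ∃ R : Language A, R.IsRegular ∧ L1 ≤ R ∧ ∀ w ∈ R, w ∉ L2

/-! ### Linear sets and regular approximations -/

structure LinSet (n : ℕ) where
  base : Fin n → ℤ
  periods : Set (Fin n → ℤ)
  finP : periods.Finite

def LinSet.toSet {n : ℕ} (L : LinSet n) : Set (Fin n → ℤ) :=
  {x | ∃ p ∈ AddSubmonoid.closure L.periods, x = L.base + p}

def inBox {n : ℕ} (k : ℕ) (x : Fin n → ℤ) : Prop :=
  ∀ j, -(k : ℤ) ≤ x j ∧ x j ≤ (k : ℤ)

/-- Reachability in the ε-NFA underlying the `k`-th regular approximation of `L`: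
states are vectors in `[-k,k]^n`, letters move by their effect, ε-transitions
subtract a period. -/
inductive KReach {n : ℕ} (L : LinSet n) (k : ℕ) :
    (Fin n → ℤ) → List (Sig n) → (Fin n → ℤ) → Prop
  | refl (x : Fin n → ℤ) (h : inBox k x) : KReach L k x [] x
  | letter {x y : Fin n → ℤ} {w : List (Sig n)} (a : Sig n)
      (h : inBox k x) (h' : inBox k (x + letterEff a)) :
      KReach L k (x + letterEff a) w y → KReach L k x (a :: w) y
  | eps {x y : Fin n → ℤ} {w : List (Sig n)} {p : Fin n → ℤ}
      (hp : p ∈ L.periods) (h : inBox k x) (h' : inBox k (x - p)) :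
      KReach L k (x - p) w y → KReach L k x w y

/-- The `k`-th regular approximation `K^k(L)`. -/
def KApprox {n : ℕ} (L : LinSet n) (k : ℕ) : Language (Sig n) :=
  {w | ∃ y, KReach L k 0 w y ∧ y ∈ L.toSet}

/-! ### The `⊕⁺` operation and the families `R_ℓ` -/

def posPlus {n : ℕ} (K L : Set (Fin n → ℤ)) : Set (Fin n → ℤ) :=
  {x | (∀ j, 0 ≤ x j) ∧ ∃ a ∈ K, (∀ j, 0 ≤ a j) ∧ ∃ b ∈ L, x = a + b}

def posFoldAux {n : ℕ} : Set (Fin n → ℤ) → List (Set (Fin n → ℤ)) → Set (Fin n → ℤ)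
  | S, [] => S
  | S, L :: Ls => posFoldAux (posPlus S L) Ls

/-- `posFold [L₁, …, L_ℓ] = L₁ ⊕⁺ ⋯ ⊕⁺ L_ℓ` (associated to the left); for `ℓ = 1`
it is `L₁` itself. -/
def posFold {n : ℕ} : List (Set (Fin n → ℤ)) → Set (Fin n → ℤ)
  | [] => ∅
  | L :: Ls => posFoldAux L Ls

/-- The family `R_ℓ`. -/
def RFam (n ℓ : ℕ) : Set (Language (Sig n)) :=
  {K | ∃ (k : ℕ) (Ls : List (LinSet n)), Ls.length = ℓ ∧
      (0 : Fin n → ℤ) ∉ posFold (Ls.map LinSet.toSet) ∧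
      K = (Ls.map (fun L => KApprox L k)).prod}

/-- `R_{≤ m} = ⋃_{1 ≤ i ≤ m} R_i`. -/
def RleFam (n m : ℕ) : Set (Language (Sig n)) :=
  ⋃ i ∈ Set.Icc 1 m, RFam n i

/-- `R = ⋃_{ℓ ≥ 1} R_ℓ`. -/
def RAll (n : ℕ) : Set (Language (Sig n)) :=
  ⋃ i ∈ Set.Ici 1, RFam n i

/-! ### Basic separator sets -/

def IsBasicSepSet {n : ℕ} (S : Language (Sig n)) (B : Set (Language (Sig n))) : Prop :=
  (∀ K ∈ B, K.IsRegular ∧ ∀ w ∈ K, w ∉ S) ∧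
  (∀ L : Language (Sig n), L.IsRegular → (∀ w ∈ L, w ∉ S) →
    ∃ F ⊆ B, F.Finite ∧ ∀ w ∈ L, ∃ K ∈ F, w ∈ K)

/-! Extra defs for specific statements -/

/-- `u ∼_A v`: the words induce the same state transformation in the DFA `M`. -/
def simEq {α σ : Type} (M : DFA α σ) (u v : List α) : Prop :=
  ∀ p : σ, M.evalFrom p u = M.evalFrom p v

/-- Assemble `w₀ m₁ w₁ ⋯ m_k w_k` over `Σ ⊎ Σ#` (`Sum.inl` = plain, `Sum.inr` = marked). -/
def assemble {α : Type} : List (List α) → List α → List (α ⊕ α)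
  | [], _ => []
  | w :: _, [] => w.map Sum.inl
  | w :: ws, m :: ms => w.map Sum.inl ++ Sum.inr m :: assemble ws ms

/-- The set of effects of a language. -/
def effSet {n : ℕ} (L : Language (Sig n)) : Set (Fin n → ℤ) :=
  {v | ∃ w ∈ L, wordEff w = v}

/-- `Mod(μ, v)`. -/
def ModLang (n μ : ℕ) (v : Fin n → ℤ) : Language (Sig n) :=
  {w | ∀ j, wordEff w j ≡ v j [ZMOD (μ : ℤ)]}

/-- `ModSet(μ, v)`: base `v`, periods `{±μ·e_i}`. -/
def ModSet (n μ : ℕ) (v : Fin n → ℤ) : LinSet n where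
  base := v
  periods := (Set.range fun i : Fin n => (μ : ℤ) • Pi.single i (1 : ℤ)) ∪
    (Set.range fun i : Fin n => -((μ : ℤ) • Pi.single i (1 : ℤ)))
  finP := (Set.finite_range _).union (Set.finite_range _)

/-- `Cov(k, i)`. -/
def CovLang (n k : ℕ) (i : Fin n) : Language (Sig n) :=
  {x | ∃ w w', x = w ++ w' ∧ wordEff w i < 0 ∧
      ∀ u, u <+: w → u ≠ w → 0 ≤ wordEff u i ∧ wordEff u i ≤ (k : ℤ)}

/-- `L_{neg,i}`: base `-e_i`, periods `{±e_j : j ≠ i}`. -/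
def LNeg (n : ℕ) (i : Fin n) : LinSet n where
  base := -Pi.single i 1
  periods := ((fun j : Fin n => Pi.single j (1 : ℤ)) '' {j | j ≠ i}) ∪
    ((fun j : Fin n => -Pi.single j (1 : ℤ)) '' {j | j ≠ i})
  finP := ((Set.toFinite _).image _).union ((Set.toFinite _).image _)

/-- `Z`: base `0`, periods `{±e_j}`. -/
def ZSet (n : ℕ) : LinSet n where
  base := 0
  periods := (Set.range fun j : Fin n => Pi.single j (1 : ℤ)) ∪
    (Set.range fun j : Fin n => -Pi.single j (1 : ℤ))
  finP := (Set.finite_range _).union (Set.finite_range _)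

/-! The language `C_ℓ` over `Σ₂` -/

def ltrA1 : Sig 2 := (0, true)
def ltrA2 : Sig 2 := (1, true)
def ltrB1 : Sig 2 := (0, false)
def ltrB2 : Sig 2 := (1, false)

def fwdWord (j : ℕ) : List (Sig 2) := ltrA1 :: List.replicate j ltrA2
def bwdWord (j : ℕ) : List (Sig 2) := ltrB1 :: List.replicate j ltrB2

def segLang (j : ℕ) : Language (Sig 2) :=
  KStar.kstar ({fwdWord j, bwdWord j} : Language (Sig 2))

def aPlusLang : Language (Sig 2) :=
  {w | ∃ m : ℕ, 0 < m ∧ w = List.replicate m ltrA1}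

def CLang (ℓ : ℕ) : Language (Sig 2) :=
  aPlusLang * ((List.range ℓ).map (fun j => segLang (j + 1))).prod

/-!
On its first `i`-negative prefix a word has `i`-effect exactly `-1`, all earlier prefixes
having `i`-effect in `[0, k]`. The automaton for `K^k(L_{neg,i})` can therefore keep its state
at `x_i · e_i`: a letter `a_i`/`ā_i` moves `x_i`, and any other letter `a_j`/`ā_j` is cancelled
at once by the ε-move of the period `±e_j`. For `K^k(Z)` every letter is cancelled in this way,
so it accepts every word. Conversely, no period of `L_{neg,i}` touches coordinate `i`, so every
word of `K^k(L_{neg,i})` has `i`-effect `-1`; such a word is not in `D_n^↑` and its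
effect is not in `ℕ^n`.
-/

section Effects

variable {n : ℕ}

@[simp]
lemma wordEff_nil : wordEff ([] : List (Sig n)) = 0 := rfl

@[simp]
lemma wordEff_cons (a : Sig n) (w : List (Sig n)) :
    wordEff (a :: w) = letterEff a + wordEff w := by
  simp [wordEff]

@[simp]
lemma wordEff_append (u v : List (Sig n)) :
    wordEff (u ++ v) = wordEff u + wordEff v := by
  simp [wordEff]

lemma letterEff_apply_of_ne {a : Sig n} {j : Fin n} (h : j ≠ a.1) : letterEff a j = 0 :=
  if_neg h

lemma abs_letterEff_le_one (a : Sig n) (j : Fin n) : |letterEff a j| ≤ 1 := by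
  unfold letterEff
  split_ifs <;> simp

lemma single_add_letterEff_of_eq {a : Sig n} {i : Fin n} (ha : a.1 = i) (c : ℤ) :
    Pi.single i c + letterEff a = Pi.single i (c + letterEff a i) := by
  subst ha
  funext j
  by_cases hj : j = a.1
  · subst hj; simp
  · simp [hj, letterEff_apply_of_ne hj]

lemma wordEff_apply_eq_neg_one_of_first_negative {i : Fin n} {k : ℕ} {w : List (Sig n)}
    (hneg : wordEff w i < 0)
    (hpre : ∀ u, u <+: w → u ≠ w → 0 ≤ wordEff u i ∧ wordEff u i ≤ k) :
    wordEff w i = -1 := by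
  rcases List.eq_nil_or_concat w with rfl | ⟨u, a, rfl⟩
  · simp at hneg
  · rw [List.concat_eq_append] at hneg hpre ⊢
    have hu := (hpre u (List.prefix_append u [a]) (by simp)).1
    have ha := abs_le.mp (abs_letterEff_le_one a i)
    simp only [wordEff_append, wordEff_cons, wordEff_nil,
      Pi.add_apply, Pi.zero_apply] at hneg ⊢
    omega

end Effects

lemma inBox_single {n k : ℕ} {i : Fin n} {c : ℤ} (h₁ : -(k : ℤ) ≤ c) (h₂ : c ≤ k) :
    inBox k (Pi.single i c) := by
  intro j
  by_cases hj : j = i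
  · subst hj; simpa using ⟨h₁, h₂⟩
  · simp [hj]

lemma inBox_add_letterEff {n k : ℕ} (hk : 1 ≤ k) {x : Fin n → ℤ} (hx : inBox k x)
    {a : Sig n} (hxa : x a.1 = 0) : inBox k (x + letterEff a) := by
  intro j
  by_cases hj : j = a.1
  · subst hj
    have := abs_le.mp (abs_letterEff_le_one a a.1)
    simp only [Pi.add_apply, hxa]
    omega
  · simpa [letterEff_apply_of_ne hj] using hx j

section KReach

variable {n k : ℕ} {L : LinSet n}

lemma LinSet.apply_eq_base_of_mem_toSet {i : Fin n} (hL : ∀ p ∈ L.periods, p i = 0)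
    {y : Fin n → ℤ} (hy : y ∈ L.toSet) : y i = L.base i := by
  obtain ⟨p, hp, rfl⟩ := hy
  have hker : AddSubmonoid.closure L.periods ≤
      AddMonoidHom.mker (Pi.evalAddMonoidHom (fun _ : Fin n => ℤ) i) :=
    AddSubmonoid.closure_le.mpr hL
  simpa using hker hp

lemma KReach.apply_eq_add_wordEff {i : Fin n} (hL : ∀ p ∈ L.periods, p i = 0)
    {x y : Fin n → ℤ} {w : List (Sig n)} (h : KReach L k x w y) :
    y i = x i + wordEff w i := by
  induction h with
  | refl => simp
  | letter a _ _ _ ih => simp only [ih, wordEff_cons, Pi.add_apply]; ring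
  | eps hp _ _ _ ih => simpa [hL _ hp] using ih

lemma KReach.cons_of_letterEff_mem {x y : Fin n → ℤ} {w : List (Sig n)} {a : Sig n}
    (hp : letterEff a ∈ L.periods) (hx : inBox k x) (hxa : inBox k (x + letterEff a))
    (h : KReach L k x w y) : KReach L k x (a :: w) y :=
  .letter a hx hxa <|
    .eps hp hxa (by rwa [add_sub_cancel_right]) (by rwa [add_sub_cancel_right])

lemma KReach.zero_of_forall_letterEff_mem (hk : 1 ≤ k) (hL : ∀ a, letterEff a ∈ L.periods)
    (w : List (Sig n)) : KReach L k 0 w 0 := by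
  have h0 : inBox k (0 : Fin n → ℤ) := fun j => by simp only [Pi.zero_apply]; omega
  induction w with
  | nil => exact .refl 0 h0
  | cons a w ih =>
    exact ih.cons_of_letterEff_mem (hL a) h0 (inBox_add_letterEff hk h0 rfl)

lemma KReach.single_of_prefix_bounds (hk : 1 ≤ k) {i : Fin n}
    (hL : ∀ a : Sig n, a.1 ≠ i → letterEff a ∈ L.periods) (w : List (Sig n)) (c : ℤ)
    (h : ∀ u, u <+: w → -(k : ℤ) ≤ c + wordEff u i ∧ c + wordEff u i ≤ k) :
    KReach L k (Pi.single i c) w (Pi.single i (c + wordEff w i)) := by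
  have hc : inBox k (Pi.single i c) := by
    simpa using inBox_single (h [] List.nil_prefix).1 (h [] List.nil_prefix).2
  induction w generalizing c with
  | nil => simpa using KReach.refl _ hc
  | cons a w ih =>
    have htail : ∀ u, u <+: w →
        -(k : ℤ) ≤ c + wordEff (a :: u) i ∧ c + wordEff (a :: u) i ≤ k :=
      fun u hu => h (a :: u) (List.cons_prefix_cons.mpr ⟨rfl, hu⟩)
    by_cases ha : a.1 = i
    · have hca : inBox k (Pi.single i c + letterEff a) := by
        rw [single_add_letterEff_of_eq ha]
        exact inBox_single (by simpa using (htail [] List.nil_prefix).1)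
          (by simpa using (htail [] List.nil_prefix).2)
      have hstep := ih (c + letterEff a i) (fun u hu => by simpa [add_assoc] using htail u hu)
        (by rwa [← single_add_letterEff_of_eq ha])
      rw [← single_add_letterEff_of_eq ha] at hstep
      exact .letter a hc hca (by simpa [add_assoc] using hstep)
    · have hai : letterEff a i = 0 := letterEff_apply_of_ne (Ne.symm ha)
      have hstep := ih c (fun u hu => by simpa [hai] using htail u hu) hc
      rw [wordEff_cons, Pi.add_apply, hai, zero_add]
      exact hstep.cons_of_letterEff_mem (hL a ha) hc
        (inBox_add_letterEff hk hc (by simp [ha]))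

end KReach

section Approximations

variable {n : ℕ}

lemma letterEff_mem_ZSet_periods (a : Sig n) : letterEff a ∈ (ZSet n).periods := by
  rcases a with ⟨j, _ | _⟩
  · exact Or.inr ⟨j, by funext l; by_cases hl : l = j <;> simp [letterEff, hl]⟩
  · exact Or.inl ⟨j, by funext l; by_cases hl : l = j <;> simp [letterEff, hl]⟩

lemma letterEff_mem_LNeg_periods {i : Fin n} {a : Sig n} (ha : a.1 ≠ i) :
    letterEff a ∈ (LNeg n i).periods := by
  rcases a with ⟨j, _ | _⟩
  · exact Or.inr ⟨j, ha, by funext l; by_cases hl : l = j <;> simp [letterEff, hl]⟩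
  · exact Or.inl ⟨j, ha, by funext l; by_cases hl : l = j <;> simp [letterEff, hl]⟩

lemma LNeg_periods_apply_self {i : Fin n} {p : Fin n → ℤ} (hp : p ∈ (LNeg n i).periods) :
    p i = 0 := by
  rcases hp with ⟨j, hj, rfl⟩ | ⟨j, hj, rfl⟩ <;> simp [Pi.single_eq_of_ne' hj]

lemma LNeg_toSet_apply_self {i : Fin n} {y : Fin n → ℤ} (hy : y ∈ (LNeg n i).toSet) :
    y i = -1 := by
  simpa [LNeg] using LinSet.apply_eq_base_of_mem_toSet (fun _ => LNeg_periods_apply_self) hy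

lemma posPlus_LNeg_eq_empty (i : Fin n) (S : Set (Fin n → ℤ)) :
    posPlus (LNeg n i).toSet S = ∅ := by
  refine Set.eq_empty_of_forall_notMem fun x ⟨_, a, ha, ha₀, _⟩ => ?_
  have := ha₀ i
  rw [LNeg_toSet_apply_self ha] at this
  omega

lemma mem_KApprox_ZSet {k : ℕ} (hk : 1 ≤ k) (w : List (Sig n)) : w ∈ KApprox (ZSet n) k :=
  ⟨0, KReach.zero_of_forall_letterEff_mem hk letterEff_mem_ZSet_periods w,
    0, AddSubmonoid.zero_mem _, by simp [ZSet]⟩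

lemma wordEff_apply_of_mem_KApprox_LNeg {i : Fin n} {k : ℕ} {w : List (Sig n)}
    (hw : w ∈ KApprox (LNeg n i) k) : wordEff w i = -1 := by
  obtain ⟨y, hr, hy⟩ := hw
  simpa [LNeg_toSet_apply_self hy] using
    (hr.apply_eq_add_wordEff fun _ => LNeg_periods_apply_self).symm

lemma mem_KApprox_LNeg {i : Fin n} {k : ℕ} (hk : 1 ≤ k) {w : List (Sig n)}
    (hw : wordEff w i = -1)
    (hpre : ∀ u, u <+: w → -(k : ℤ) ≤ wordEff u i ∧ wordEff u i ≤ k) :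
    w ∈ KApprox (LNeg n i) k := by
  have hr := KReach.single_of_prefix_bounds hk (fun _ => letterEff_mem_LNeg_periods) w 0
    (by simpa using hpre)
  rw [Pi.single_zero, zero_add, hw] at hr
  exact ⟨_, hr, 0, AddSubmonoid.zero_mem _, by simp [LNeg, Pi.single_neg]⟩

lemma CovLang_le_mul {i : Fin n} {k : ℕ} (hk : 1 ≤ k) :
    CovLang n k i ≤ KApprox (LNeg n i) k * KApprox (ZSet n) k := by
  rintro _ ⟨w, w', rfl, hneg, hpre⟩
  have hw := wordEff_apply_eq_neg_one_of_first_negative hneg hpre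
  refine Language.mem_mul.mpr
    ⟨w, mem_KApprox_LNeg hk hw fun u hu => ?_, w', mem_KApprox_ZSet hk w', rfl⟩
  by_cases huw : u = w
  · subst huw; omega
  · have := hpre u hu huw; omega

lemma notMem_CovDyck_of_mem_KApprox_LNeg_mul {i : Fin n} {k : ℕ} {K : Language (Sig n)}
    {w : List (Sig n)} (hw : w ∈ KApprox (LNeg n i) k * K) : w ∉ CovDyck n := by
  obtain ⟨u, hu, v, -, rfl⟩ := Language.mem_mul.mp hw
  intro hcov
  have := hcov u (List.prefix_append u v) i
  rw [wordEff_apply_of_mem_KApprox_LNeg hu] at this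
  omega

end Approximations

theorem stmt13_general (n : ℕ) (i : Fin n) (k : ℕ) (hk : 1 ≤ k) :
    (CovLang n k i ≤ KApprox (LNeg n i) k * KApprox (ZSet n) k) ∧
    (posPlus (LNeg n i).toSet (ZSet n).toSet = ∅ ∧
      KApprox (LNeg n i) k * KApprox (ZSet n) k ∈ RFam n 2) ∧
    (∀ w ∈ KApprox (LNeg n i) k * KApprox (ZSet n) k, w ∉ CovDyck n) := by
  have hempty := posPlus_LNeg_eq_empty i (ZSet n).toSet
  refine ⟨CovLang_le_mul hk, ⟨hempty, ?_⟩,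
    fun _ hw => notMem_CovDyck_of_mem_KApprox_LNeg_mul hw⟩
  refine ⟨k, [LNeg n i, ZSet n], rfl, ?_, by simp⟩
  change (0 : Fin n → ℤ) ∉ posPlus (LNeg n i).toSet (ZSet n).toSet
  simp [hempty]

theorem stmt13 (n : ℕ) (hn : 1 ≤ n) (i : Fin n) (k : ℕ) (hk : 1 ≤ k) :
    (CovLang n k i ≤ KApprox (LNeg n i) k * KApprox (ZSet n) k) ∧
    (posPlus (LNeg n i).toSet (ZSet n).toSet = ∅ ∧
      KApprox (LNeg n i) k * KApprox (ZSet n) k ∈ RFam n 2) ∧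
    (∀ w ∈ KApprox (LNeg n i) k * KApprox (ZSet n) k, w ∉ CovDyck n) :=
  stmt13_general n i k hk
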